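/- Let α ∈ 𝕋, let H : 𝕋 → ℝ be continuous with β = ∫_𝕋 H(x) dx, and define the skew product T_H(x,t) = (x + α, t + H(x) mod 1) on 𝕋². Then for every ε > 0 and every m ∈ ℕ with ‖m(α,β)‖ < ε (L¹ distance in 𝕋²), there exists a point (x,t) ∈ 𝕋² with d((x,t), T_H^m(x,t)) < ε. Consequently {m ∈ ℕ : ‖m(α,β)‖ < ε} ⊆ 𝔯_ε(𝕋², T_H). -/

import Mathlib

open Function Metric Set Filter

noncomputable section

abbrev Torus := AddCircle (1 : ℝ)

/-- `A ⊆ ℕ` is a Bohr₀ set: it contains all positive `n` with `‖nα‖ < δ`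
for some `δ > 0`, `d ∈ ℕ`, `α ∈ 𝕋^d` (L¹ distance to zero). -/
def IsBohr0 (A : Set ℕ) : Prop :=
  ∃ (d : ℕ) (α : Fin d → Torus) (δ : ℝ), 0 < δ ∧
    ∀ n : ℕ, 0 < n → (∑ i, ‖n • α i‖) < δ → n ∈ A


/-- The skew product map `T_H(x,t) = (x + α, t + H(x) mod 1)` on `𝕋²`, for a
real-valued skewing function `H`. -/
def skewR (α : Torus) (H : Torus → ℝ) : Torus × Torus → Torus × Torus :=
  fun p => (p.1 + α, p.2 + ((H p.1 : ℝ) : Torus))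

open MeasureTheory in
lemma iter_skew (α : Torus) (H : Torus → ℝ) (m : ℕ) (x t : Torus) :
    (skewR α H)^[m] (x, t) =
      (x + m • α, t + ((∑ i ∈ Finset.range m, H (x + i • α) : ℝ) : Torus)) := by
  induction m generalizing x t with
  | zero => simp
  | succ n ih =>
    rw [Function.iterate_succ_apply]
    show (skewR α H)^[n] (x + α, t + ((H x : ℝ) : Torus)) = _
    rw [ih]
    refine Prod.ext ?_ ?_
    · show x + α + n • α = x + (n + 1) • α
      rw [succ_nsmul]; abel
    · show t + ((H x : ℝ) : Torus) + _ = t + _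
      rw [Finset.sum_range_succ']
      have h1 : ∀ i : ℕ, x + α + i • α = x + (i + 1) • α := by
        intro i; rw [succ_nsmul]; abel
      simp_rw [h1, zero_nsmul, add_zero, AddCircle.coe_add]
      abel

open MeasureTheory in
theorem mean_controls_returns (α : Torus) (H : Torus → ℝ) (hc : Continuous H)
    (β : ℝ) (hβ : β = ∫ x : Torus, H x)
    (ε : ℝ) (hε : 0 < ε) (m : ℕ)
    (hm : ‖m • α‖ + ‖(((m : ℝ) * β : ℝ) : Torus)‖ < ε) :
    ∃ p : Torus × Torus,
      dist p.1 ((skewR α H)^[m] p).1 + dist p.2 ((skewR α H)^[m] p).2 < ε := by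
  set S : Torus → ℝ := fun x => ∑ i ∈ Finset.range m, H (x + i • α) with hS
  have hScont : Continuous S := by
    apply continuous_finset_sum
    intro i _
    exact hc.comp (continuous_id.add continuous_const)
  have hInt : ∀ g : Torus → ℝ, Continuous g → Integrable g (volume : Measure Torus) :=
    fun g hg => hg.integrable_of_hasCompactSupport (HasCompactSupport.of_compactSpace g)
  have hvol : (volume (univ : Set Torus)).toReal = 1 := by
    rw [AddCircle.measure_univ]; simp
  have hSint : (∫ x : Torus, S x) = (m : ℝ) * β := by
    rw [hS]
    rw [integral_finset_sum (Finset.range m)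
      (f := fun i x => H (x + i • α))
      (fun i _ => hInt _ (hc.comp (continuous_id.add continuous_const)))]
    have : ∀ i ∈ Finset.range m, (∫ x : Torus, H (x + i • α)) = β := by
      intro i _
      rw [hβ]; exact integral_add_right_eq_self H (i • α)
    rw [Finset.sum_congr rfl this]
    simp [mul_comm]
  -- find min and max of S
  obtain ⟨a, -, ha⟩ := isCompact_univ.exists_isMinOn univ_nonempty hScont.continuousOn
  obtain ⟨b, -, hb⟩ := isCompact_univ.exists_isMaxOn univ_nonempty hScont.continuousOn
  have hSa : S a ≤ (m : ℝ) * β := by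
    rw [← hSint]
    calc S a = ∫ _ : Torus, S a := by rw [integral_const, measureReal_def, hvol, one_smul]
    _ ≤ ∫ x : Torus, S x := integral_mono (integrable_const _) (hInt S hScont)
        (fun x => ha (mem_univ x))
  have hSb : (m : ℝ) * β ≤ S b := by
    rw [← hSint]
    calc (∫ x : Torus, S x) ≤ ∫ _ : Torus, S b :=
        integral_mono (hInt S hScont) (integrable_const _) (fun x => hb (mem_univ x))
    _ = S b := by rw [integral_const, measureReal_def, hvol, one_smul]
  obtain ⟨x, hx⟩ := intermediate_value_univ a b hScont ⟨hSa, hSb⟩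
  refine ⟨(x, 0), ?_⟩
  rw [iter_skew]
  simp only
  rw [dist_self_add_right, dist_self_add_right]
  have : (∑ i ∈ Finset.range m, H (x + i • α)) = (m : ℝ) * β := hx
  rw [this]
  exact hm
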